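/- arXiv:2505.20666 — 3 statements merged into one kernel-verified Lean document; each statement's English description precedes it below -/
import Mathlib

section
/- Let E be a complete real inner product space and f : E → ℝ a differentiable, γ-strongly convex function (γ > 0) whose gradient is Lipschitz with constant μ ≥ γ. Let θ⋆ be the (unique) minimizer of f, so ∇f(θ⋆) = 0, and let 0 < η ≤ 1/μ. Then the gradient-descent iterates θ_{t+1} = θ_t − η ∇f(θ_t) satisfy ‖θ_t − θ⋆‖² ≤ (1 − ηγ)^t ‖θ_0 − θ⋆‖² for every t ∈ ℕ. -/
/-!
Write `d = θ t - θstar` and `g = ∇f (θ t)`, so that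
`‖θ (t+1) - θstar‖² = ‖d‖² - 2η⟪g, d⟫ + η²‖g‖²`.
Strong convexity at `θ t`, evaluated at `θstar`, gives `⟪g, d⟫ ≥ f (θ t) - f θstar + γ/2 ‖d‖²`.
The descent lemma for the `μ`-Lipschitz gradient with `ημ ≤ 1` gives
`f θstar ≤ f (θ (t+1)) ≤ f (θ t) - η/2 ‖g‖²`, i.e. `η²‖g‖² ≤ 2η (f (θ t) - f θstar)`.
The two function gaps cancel, leaving `‖θ (t+1) - θstar‖² ≤ (1 - ηγ) ‖d‖²`.
-/

open Set RealInnerProductSpace InnerProductSpace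

theorem ConvexOn.le_sub_of_hasFDerivAt {E : Type*} [NormedAddCommGroup E] [NormedSpace ℝ E]
    {f : E → ℝ} {f' : E →L[ℝ] ℝ} {x : E} (hf : ConvexOn ℝ univ f) (hf' : HasFDerivAt f f' x)
    (y : E) : f' (y - x) ≤ f y - f x := by
  set ℓ : ℝ →ᵃ[ℝ] E := AffineMap.lineMap x y
  have hderiv : HasDerivAt (f ∘ ℓ) (f' (y - x)) 0 :=
    hf'.comp_hasDerivAt_of_eq 0 AffineMap.hasDerivAt_lineMap (by simp [ℓ])
  simpa [slope_def_field, ℓ] using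
    (hf.comp_affineMap ℓ).le_slope_of_hasDerivAt (mem_univ 0) (mem_univ 1) one_pos hderiv

section InnerProductSpace

variable {E : Type*} [NormedAddCommGroup E] [InnerProductSpace ℝ E] [CompleteSpace E]
  {f : E → ℝ} {f' : E → E} {μ γ η : ℝ}

theorem StrongConvexOn.add_inner_add_le {m : ℝ} {g x : E}
    (hf : StrongConvexOn univ m f) (hg : HasGradientAt f g x) (y : E) :
    f x + ⟪g, y - x⟫_ℝ + m / 2 * ‖y - x‖ ^ 2 ≤ f y := by
  have hderiv := (hasGradientAt_iff_hasFDerivAt.mp hg).sub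
    ((hasStrictFDerivAt_norm_sq x).hasFDerivAt.const_mul (m / 2))
  have hfirst_order := (strongConvexOn_iff_convex.mp hf).le_sub_of_hasFDerivAt hderiv y
  simp only [sub_apply, toDual_apply_apply, smul_apply, coe_innerSL_apply, nsmul_eq_mul,
    Nat.cast_ofNat, smul_eq_mul] at hfirst_order
  have hsq : ‖y - x‖ ^ 2 = ‖y‖ ^ 2 - ‖x‖ ^ 2 - 2 * ⟪x, y - x⟫_ℝ := by
    rw [norm_sub_sq_real, inner_sub_right, real_inner_self_eq_norm_sq, real_inner_comm]
    ring
  rw [hsq]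
  linear_combination hfirst_order

theorem le_add_inner_add_of_lipschitz_gradient (hf : ∀ z, HasGradientAt f (f' z) z)
    (hlip : ∀ x y, ‖f' x - f' y‖ ≤ μ * ‖x - y‖) (x y : E) :
    f y ≤ f x + ⟪f' x, y - x⟫_ℝ + μ / 2 * ‖y - x‖ ^ 2 := by
  set ℓ : ℝ →ᵃ[ℝ] E := AffineMap.lineMap x y
  set ψ : ℝ → ℝ := fun t => f (ℓ t) - t * ⟪f' x, y - x⟫_ℝ - μ / 2 * ‖y - x‖ ^ 2 * t ^ 2
  have hψ_deriv : ∀ t, HasDerivAt ψ (⟪f' (ℓ t) - f' x, y - x⟫_ℝ - μ * ‖y - x‖ ^ 2 * t) t := by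
    intro t
    have hfℓ : HasDerivAt (f ∘ ℓ) ⟪f' (ℓ t), y - x⟫_ℝ t := by
      simpa using (hf (ℓ t)).hasFDerivAt.comp_hasDerivAt t AffineMap.hasDerivAt_lineMap
    refine ((hfℓ.sub ((hasDerivAt_id t).mul_const _)).sub
      ((hasDerivAt_pow 2 t).const_mul (μ / 2 * ‖y - x‖ ^ 2))).congr_deriv ?_
    rw [inner_sub_left]
    ring
  have hψ_nonpos : ∀ t ∈ interior (Icc (0 : ℝ) 1),
      ⟪f' (ℓ t) - f' x, y - x⟫_ℝ - μ * ‖y - x‖ ^ 2 * t ≤ 0 := by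
    intro t ht
    rw [interior_Icc] at ht
    have hℓ : ℓ t - x = t • (y - x) := by simp [ℓ, AffineMap.lineMap_apply]
    rw [sub_nonpos]
    calc ⟪f' (ℓ t) - f' x, y - x⟫_ℝ ≤ ‖f' (ℓ t) - f' x‖ * ‖y - x‖ := real_inner_le_norm _ _
      _ ≤ μ * ‖ℓ t - x‖ * ‖y - x‖ := mul_le_mul_of_nonneg_right (hlip _ _) (norm_nonneg _)
      _ = μ * ‖y - x‖ ^ 2 * t := by rw [hℓ, norm_smul, Real.norm_of_nonneg ht.1.le]; ring
  have hanti : AntitoneOn ψ (Icc 0 1) :=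
    antitoneOn_of_hasDerivWithinAt_nonpos (convex_Icc 0 1)
      (fun t _ => (hψ_deriv t).continuousAt.continuousWithinAt)
      (fun t _ => (hψ_deriv t).hasDerivWithinAt) hψ_nonpos
  have hψ_le := hanti (left_mem_Icc.2 zero_le_one) (right_mem_Icc.2 zero_le_one) zero_le_one
  simp only [ψ, ℓ, AffineMap.lineMap_apply_one, AffineMap.lineMap_apply_zero] at hψ_le
  linarith

theorem apply_gradient_step_le (hf : ∀ z, HasGradientAt f (f' z) z)
    (hlip : ∀ x y, ‖f' x - f' y‖ ≤ μ * ‖x - y‖) (hη : 0 ≤ η) (hημ : η * μ ≤ 1) (x : E) :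
    f (x - η • f' x) ≤ f x - η / 2 * ‖f' x‖ ^ 2 := by
  have hdescent := le_add_inner_add_of_lipschitz_gradient hf hlip x (x - η • f' x)
  rw [sub_sub_cancel_left, inner_neg_right, norm_neg, real_inner_smul_right,
    real_inner_self_eq_norm_sq, norm_smul, mul_pow, Real.norm_of_nonneg hη] at hdescent
  nlinarith [mul_le_mul_of_nonneg_left hημ (mul_nonneg hη (sq_nonneg ‖f' x‖))]

theorem norm_gradient_step_sub_sq_le {xstar : E}
    (hf : ∀ z, HasGradientAt f (f' z) z) (hsc : StrongConvexOn univ γ f)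
    (hlip : ∀ x y, ‖f' x - f' y‖ ≤ μ * ‖x - y‖) (hmin : ∀ z, f xstar ≤ f z)
    (hη : 0 ≤ η) (hημ : η * μ ≤ 1) (x : E) :
    ‖x - η • f' x - xstar‖ ^ 2 ≤ (1 - η * γ) * ‖x - xstar‖ ^ 2 := by
  have hdecrease := (hmin _).trans (apply_gradient_step_le hf hlip hη hημ x)
  have hstrong := hsc.add_inner_add_le (hf x) xstar
  have hexpand : ‖x - η • f' x - xstar‖ ^ 2
      = ‖x - xstar‖ ^ 2 + 2 * η * ⟪f' x, xstar - x⟫_ℝ + η ^ 2 * ‖f' x‖ ^ 2 := by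
    rw [sub_right_comm, norm_sub_sq_real, real_inner_smul_right, norm_smul, mul_pow,
      Real.norm_of_nonneg hη, ← neg_sub x xstar, inner_neg_right, real_inner_comm]
    ring
  rw [norm_sub_rev] at hstrong
  rw [hexpand]
  nlinarith [mul_le_mul_of_nonneg_left hstrong hη, mul_le_mul_of_nonneg_left hdecrease hη]

end InnerProductSpace

theorem strongly_convex_gradient_descent_param_decay_general
    {E : Type*} [NormedAddCommGroup E] [InnerProductSpace ℝ E] [CompleteSpace E]
    (f : E → ℝ) (μ γ η : ℝ) (θstar : E) (θ : ℕ → E)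
    (hf : Differentiable ℝ f)
    (hγpos : 0 < γ)
    (hsc : ConvexOn ℝ Set.univ (fun x : E => f x - γ / 2 * ‖x‖ ^ 2))
    (hγμ : γ ≤ μ)
    (hlip : ∀ x y : E, ‖gradient f x - gradient f y‖ ≤ μ * ‖x - y‖)
    (hmin : ∀ x : E, f θstar ≤ f x)
    (hηpos : 0 < η) (hη : η ≤ 1 / μ)
    (hiter : ∀ t : ℕ, θ (t + 1) = θ t - η • gradient f (θ t)) :
    ∀ t : ℕ, ‖θ t - θstar‖ ^ 2 ≤ (1 - η * γ) ^ t * ‖θ 0 - θstar‖ ^ 2 := by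
  have hημ : η * μ ≤ 1 := (le_div_iff₀ (hγpos.trans_le hγμ)).mp hη
  have hrate : 0 ≤ 1 - η * γ := by linarith [mul_le_mul_of_nonneg_left hγμ hηpos.le]
  intro t
  refine le_geom (u := fun n => ‖θ n - θstar‖ ^ 2) hrate t fun k _ => ?_
  rw [hiter]
  exact norm_gradient_step_sub_sq_le (fun x => (hf x).hasGradientAt)
    (strongConvexOn_iff_convex.mpr hsc) hlip hmin hηpos.le hημ (θ k)

/-- **Exponential parameter decay for strongly convex gradient descent.**
If `f` is differentiable and `γ`-strongly convex (i.e. `θ ↦ f θ - (γ/2)‖θ‖²` is convex)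
with `μ`-Lipschitz gradient (`μ ≥ γ`), `θ⋆` is its minimizer (`∇f(θ⋆) = 0`), and
`0 < η ≤ 1/μ`, then gradient descent `θ_{t+1} = θ_t - η ∇f(θ_t)` satisfies
`‖θ_t - θ⋆‖² ≤ (1 - ηγ)^t ‖θ_0 - θ⋆‖²`. -/
theorem strongly_convex_gradient_descent_param_decay
    {E : Type*} [NormedAddCommGroup E] [InnerProductSpace ℝ E] [CompleteSpace E]
    (f : E → ℝ) (μ γ η : ℝ) (θstar : E) (θ : ℕ → E)
    (hf : Differentiable ℝ f)
    (hγpos : 0 < γ)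
    (hsc : ConvexOn ℝ Set.univ (fun x : E => f x - γ / 2 * ‖x‖ ^ 2))
    (hγμ : γ ≤ μ)
    (hlip : ∀ x y : E, ‖gradient f x - gradient f y‖ ≤ μ * ‖x - y‖)
    (hmin : ∀ x : E, f θstar ≤ f x)
    (hgrad0 : gradient f θstar = 0)
    (hηpos : 0 < η) (hη : η ≤ 1 / μ)
    (hiter : ∀ t : ℕ, θ (t + 1) = θ t - η • gradient f (θ t)) :
    ∀ t : ℕ, ‖θ t - θstar‖ ^ 2 ≤ (1 - η * γ) ^ t * ‖θ 0 - θstar‖ ^ 2 :=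
  strongly_convex_gradient_descent_param_decay_general f μ γ η θstar θ hf hγpos hsc hγμ hlip hmin
    hηpos hη hiter
end

section
/- Let E be a complete real inner product space and f : E → ℝ a differentiable function whose gradient is Lipschitz with constant μ > 0, satisfying the Polyak–Łojasiewicz inequality ‖∇f(θ)‖² ≥ 2γ(f(θ) − f⋆) for all θ, with 0 < γ ≤ μ and f⋆ = inf f. For any θ and 0 < η ≤ 1/μ, the single gradient step θ⁺ = θ − η∇f(θ) satisfies f(θ⁺) − f⋆ ≤ (1 − ηγ)(f(θ) − f⋆). -/
/-! Integrating the Lipschitz bound on `∇f` along a segment gives the descent lemma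
`f (x + v) ≤ f x + ⟪∇f x, v⟫ + μ/2 ‖v‖²`. For the step `v = -η ∇f θ` with `μη ≤ 1` it guarantees
a decrease of at least `η/2 ‖∇f θ‖²`, which the PL inequality turns into the factor `1 - ηγ`. -/

open scoped RealInnerProductSpace

section LipschitzGradient

variable {E : Type*} [NormedAddCommGroup E] [InnerProductSpace ℝ E] [CompleteSpace E]
  {f : E → ℝ} {μ : ℝ}

theorem HasGradientAt.hasDerivAt_add_smul {f' x v : E} {t : ℝ}
    (h : HasGradientAt f f' (x + t • v)) :
    HasDerivAt (fun s : ℝ => f (x + s • v)) ⟪f', v⟫ t := by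
  have hline : HasDerivAt (fun s : ℝ => x + s • v) v t := by
    simpa using ((hasDerivAt_id t).smul_const v).const_add x
  exact (h.hasFDerivAt.comp_hasDerivAt t hline).congr_deriv (by simp)

theorem inner_gradient_add_smul_sub_le
    (hlip : ∀ x y : E, ‖gradient f x - gradient f y‖ ≤ μ * ‖x - y‖) (x v : E) {t : ℝ}
    (ht : 0 ≤ t) :
    ⟪gradient f (x + t • v) - gradient f x, v⟫ ≤ μ * t * ‖v‖ ^ 2 :=
  calc ⟪gradient f (x + t • v) - gradient f x, v⟫
      ≤ ‖gradient f (x + t • v) - gradient f x‖ * ‖v‖ := real_inner_le_norm _ _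
    _ ≤ μ * ‖(x + t • v) - x‖ * ‖v‖ := by gcongr; exact hlip _ _
    _ = μ * t * ‖v‖ ^ 2 := by
      rw [add_sub_cancel_left, norm_smul, Real.norm_of_nonneg ht]; ring

theorem le_add_inner_gradient_add_sq (hf : Differentiable ℝ f)
    (hlip : ∀ x y : E, ‖gradient f x - gradient f y‖ ≤ μ * ‖x - y‖) (x v : E) :
    f (x + v) ≤ f x + ⟪gradient f x, v⟫ + μ / 2 * ‖v‖ ^ 2 := by
  set φ : ℝ → ℝ := fun t => f (x + t • v) - t * ⟪gradient f x, v⟫ - μ / 2 * t ^ 2 * ‖v‖ ^ 2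
  have hφ : ∀ t, HasDerivAt φ
      (⟪gradient f (x + t • v) - gradient f x, v⟫ - μ * t * ‖v‖ ^ 2) t := by
    intro t
    have h := (((hf (x + t • v)).hasGradientAt.hasDerivAt_add_smul).sub
      ((hasDerivAt_id t).mul_const ⟪gradient f x, v⟫)).sub
      (((hasDerivAt_pow 2 t).const_mul (μ / 2)).mul_const (‖v‖ ^ 2))
    refine h.congr_deriv ?_
    simp only [inner_sub_left, one_mul, Nat.cast_ofNat]
    ring
  have hanti : AntitoneOn φ (Set.Ici 0) := by
    refine antitoneOn_of_hasDerivWithinAt_nonpos (convex_Ici 0)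
      (fun t _ => (hφ t).continuousAt.continuousWithinAt)
      (fun t _ => (hφ t).hasDerivWithinAt) fun t ht => ?_
    rw [interior_Ici] at ht
    linarith [inner_gradient_add_smul_sub_le hlip x v ht.le]
  have h10 : φ 1 ≤ φ 0 := hanti Set.self_mem_Ici (Set.mem_Ici.2 zero_le_one) zero_le_one
  simp only [φ, one_smul, zero_smul, add_zero, one_pow, one_mul, mul_one, zero_mul,
    zero_pow two_ne_zero, mul_zero, sub_zero] at h10
  linarith

theorem le_sub_smul_gradient (hf : Differentiable ℝ f)
    (hlip : ∀ x y : E, ‖gradient f x - gradient f y‖ ≤ μ * ‖x - y‖) (x : E) (η : ℝ) :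
    f (x - η • gradient f x) ≤ f x - η * (1 - μ * η / 2) * ‖gradient f x‖ ^ 2 := by
  have h := le_add_inner_gradient_add_sq hf hlip x (-(η • gradient f x))
  rw [← sub_eq_add_neg, inner_neg_right, real_inner_smul_right, real_inner_self_eq_norm_sq,
    norm_neg, norm_smul, mul_pow, Real.norm_eq_abs, sq_abs] at h
  linarith

end LipschitzGradient

theorem pl_one_step_contraction_general
    {E : Type*} [NormedAddCommGroup E] [InnerProductSpace ℝ E] [CompleteSpace E]
    (f : E → ℝ) (μ γ η fstar : ℝ) (θ : E)
    (hf : Differentiable ℝ f)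
    (hlip : ∀ x y : E, ‖gradient f x - gradient f y‖ ≤ μ * ‖x - y‖)
    (hPL : ∀ x : E, 2 * γ * (f x - fstar) ≤ ‖gradient f x‖ ^ 2)
    (hηpos : 0 < η) (hη : η ≤ 1 / μ) :
    f (θ - η • gradient f θ) - fstar ≤ (1 - η * γ) * (f θ - fstar) := by
  have hμη : μ * η ≤ 1 := by
    rcases le_or_gt μ 0 with hμ | hμ
    · nlinarith
    · rwa [le_div_iff₀ hμ, mul_comm] at hη
  have hstep := le_sub_smul_gradient hf hlip θ η
  calc f (θ - η • gradient f θ) - fstar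
      ≤ f θ - fstar - η * (1 - μ * η / 2) * ‖gradient f θ‖ ^ 2 := by linarith
    _ ≤ f θ - fstar - η / 2 * ‖gradient f θ‖ ^ 2 := by
      have : η / 2 ≤ η * (1 - μ * η / 2) := by nlinarith
      gcongr
    _ ≤ (1 - η * γ) * (f θ - fstar) := by nlinarith [hPL θ]

/-- **One-step PL contraction.** If `f` is differentiable with `μ`-Lipschitz gradient
(`μ > 0`), satisfies the PL inequality `‖∇f x‖² ≥ 2γ (f x - f⋆)` with `0 < γ ≤ μ` and
`f⋆ = inf f`, and `0 < η ≤ 1/μ`, then the single gradient step `θ⁺ = θ - η ∇f(θ)`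
satisfies `f(θ⁺) - f⋆ ≤ (1 - ηγ)(f(θ) - f⋆)`. -/
theorem pl_one_step_contraction
    {E : Type*} [NormedAddCommGroup E] [InnerProductSpace ℝ E] [CompleteSpace E]
    (f : E → ℝ) (μ γ η fstar : ℝ) (θ : E)
    (hf : Differentiable ℝ f)
    (hμ : 0 < μ)
    (hlip : ∀ x y : E, ‖gradient f x - gradient f y‖ ≤ μ * ‖x - y‖)
    (hγpos : 0 < γ) (hγμ : γ ≤ μ)
    (hfstar : IsGLB (Set.range f) fstar)
    (hPL : ∀ x : E, 2 * γ * (f x - fstar) ≤ ‖gradient f x‖ ^ 2)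
    (hηpos : 0 < η) (hη : η ≤ 1 / μ) :
    f (θ - η • gradient f θ) - fstar ≤ (1 - η * γ) * (f θ - fstar) :=
  pl_one_step_contraction_general f μ γ η fstar θ hf hlip hPL hηpos hη
end

section
/- Let N ≥ 1 and let L be an N×N real symmetric matrix with 0 ≤ ⟨x, L x⟩ ≤ λ_max ‖x‖² for all x ∈ ℝ^N, and let α > 0, Δt > 0 satisfy α λ_max Δt ≤ 1. Then for every n ∈ ℕ and every x ∈ ℝ^N, ‖(I − α Δt L)^n x − exp(−α n Δt · L) x‖ ≤ (n/2) · (α Δt λ_max)² · ‖x‖, where exp denotes the matrix exponential. -/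
/-!
In an orthonormal eigenbasis of the self-adjoint operator `T`, both the Euler scheme
`(1 - c T)^n` and the flow `exp(-n c T) = exp(-c T)^n` are diagonal, with entries `(1 - cμ)^n`
and `exp(-cμ)^n` for eigenvalues `μ ∈ [0, λ]`. Under the CFL condition `cλ ≤ 1` both bases lie
in `[0, 1]` and differ by at most `(cμ)²/2`, so telescoping the difference of `n`-th powers bounds
every diagonal entry, hence the operator, by `n (cλ)²/2`.
-/

open scoped RealInnerProductSpace

namespace Real

theorem exp_neg_le_one_sub_add_sq_div_two {a : ℝ} (ha : 0 ≤ a) :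
    exp (-a) ≤ 1 - a + a ^ 2 / 2 := by
  have hquad : 1 + a + a ^ 2 / 2 ≤ exp a := quadratic_le_exp_of_nonneg ha
  have hinv : exp (-a) * exp a = 1 := by rw [← exp_add, neg_add_cancel, exp_zero]
  -- `(1 - a + a²/2)(1 + a + a²/2) = 1 + a⁴/4 ≥ 1`
  nlinarith [exp_pos (-a), pow_nonneg ha 4]

theorem abs_one_sub_pow_sub_exp_le {a : ℝ} (ha₀ : 0 ≤ a) (ha₁ : a ≤ 1) (n : ℕ) :
    |(1 - a) ^ n - exp (-(n * a))| ≤ n * a ^ 2 / 2 := by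
  have hlow : 1 - a ≤ exp (-a) := by linarith [add_one_le_exp (-a)]
  have hhigh : exp (-a) ≤ 1 - a + a ^ 2 / 2 := exp_neg_le_one_sub_add_sq_div_two ha₀
  have hmax : max |1 - a| |exp (-a)| ≤ 1 := by
    rw [abs_of_nonneg (by linarith), abs_of_pos (exp_pos _)]
    exact max_le (by linarith) (exp_le_one_iff.mpr (by linarith))
  rw [show -(n * a) = n * -a by ring, exp_nat_mul]
  calc |(1 - a) ^ n - exp (-a) ^ n|
      ≤ |1 - a - exp (-a)| * n * max |1 - a| |exp (-a)| ^ (n - 1) := abs_pow_sub_pow_le ..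
    _ ≤ a ^ 2 / 2 * n * 1 := by
        gcongr
        · rw [abs_sub_comm, abs_of_nonneg (by linarith)]; linarith
        · exact pow_le_one₀ (by positivity) hmax
    _ = n * a ^ 2 / 2 := by ring

end Real

namespace ContinuousLinearMap

variable {E : Type*} [NormedAddCommGroup E] [NormedSpace ℝ E]

theorem pow_apply_of_apply_eq_smul {T : E →L[ℝ] E} {v : E} {t : ℝ} (h : T v = t • v) (n : ℕ) :
    (T ^ n) v = t ^ n • v := by
  induction n with
  | zero => simp
  | succ n ih =>
    rw [pow_succ', mul_def, comp_apply, ih, map_smul, h, smul_smul, pow_succ]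

theorem exp_apply_of_apply_eq_smul [CompleteSpace E] {T : E →L[ℝ] E} {v : E} {t : ℝ}
    (h : T v = t • v) : NormedSpace.exp T v = Real.exp t • v := by
  have hT := (NormedSpace.exp_series_hasSum_exp' (𝕂 := ℝ) T).mapL (apply ℝ E v)
  have ht := (NormedSpace.exp_series_hasSum_exp' (𝕂 := ℝ) t).smul_const v
  simp only [apply_apply, _root_.smul_apply, pow_apply_of_apply_eq_smul h, smul_smul] at hT
  simp only [smul_eq_mul] at ht
  rw [Real.exp_eq_exp_ℝ]
  exact hT.unique ht

end ContinuousLinearMap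

namespace OrthonormalBasis

variable {ι 𝕜 E : Type*} [Fintype ι] [RCLike 𝕜] [NormedAddCommGroup E] [InnerProductSpace 𝕜 E]

theorem norm_apply_le_of_apply_eq_smul (b : OrthonormalBasis ι 𝕜 E) {D : E →ₗ[𝕜] E} {f : ι → 𝕜}
    (hD : ∀ i, D (b i) = f i • b i) {K : ℝ} (hK : 0 ≤ K) (hf : ∀ i, ‖f i‖ ≤ K) (x : E) :
    ‖D x‖ ≤ K * ‖x‖ := by
  have hcoord : ∀ i, inner 𝕜 (b i) (D x) = f i * inner 𝕜 (b i) x := by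
    intro i
    conv_lhs => rw [← b.sum_repr' x]
    simp only [map_sum, map_smul, hD, smul_smul]
    rw [b.orthonormal.inner_right_fintype, mul_comm]
  have hsq : ‖D x‖ ^ 2 ≤ (K * ‖x‖) ^ 2 := calc
    ‖D x‖ ^ 2 = ∑ i, ‖f i‖ ^ 2 * ‖inner 𝕜 (b i) x‖ ^ 2 := by
        simp only [← b.sum_sq_norm_inner_right (D x), hcoord, norm_mul, mul_pow]
    _ ≤ ∑ i, K ^ 2 * ‖inner 𝕜 (b i) x‖ ^ 2 := by gcongr; exact hf _
    _ = (K * ‖x‖) ^ 2 := by rw [← Finset.mul_sum, b.sum_sq_norm_inner_right, mul_pow]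
  exact (pow_le_pow_iff_left₀ (norm_nonneg _) (by positivity) two_ne_zero).mp hsq

end OrthonormalBasis

namespace IsSelfAdjoint

variable {E : Type*} [NormedAddCommGroup E] [InnerProductSpace ℝ E] [FiniteDimensional ℝ E]

theorem norm_one_sub_smul_pow_apply_sub_exp_apply_le {T : E →L[ℝ] E} (hT : IsSelfAdjoint T)
    {lam c : ℝ} (hspec : ∀ x, 0 ≤ ⟪x, T x⟫ ∧ ⟪x, T x⟫ ≤ lam * ‖x‖ ^ 2)
    (hc : 0 ≤ c) (hcfl : c * lam ≤ 1) (n : ℕ) (x : E) :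
    ‖((1 - c • T) ^ n) x - NormedSpace.exp ((-(n * c)) • T) x‖ ≤ n / 2 * (c * lam) ^ 2 * ‖x‖ := by
  set b := hT.isSymmetric.eigenvectorBasis rfl
  set μ := hT.isSymmetric.eigenvalues rfl
  have hTb : ∀ i, T (b i) = μ i • b i := hT.isSymmetric.apply_eigenvectorBasis rfl
  have hμ : ∀ i, 0 ≤ μ i ∧ μ i ≤ lam := fun i => by
    simpa [hTb i, real_inner_smul_right, b.orthonormal.1 i] using hspec (b i)
  refine b.norm_apply_le_of_apply_eq_smul
    (D := ((1 - c • T) ^ n - NormedSpace.exp ((-(n * c)) • T) : E →L[ℝ] E))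
    (f := fun i => (1 - c * μ i) ^ n - Real.exp (-(n * (c * μ i))))
    (fun i => ?_) (by positivity) (fun i => ?_) x
  · have heuler : (1 - c • T) (b i) = (1 - c * μ i) • b i := by
      rw [sub_apply, one_apply_eq_self, smul_apply, hTb i, smul_smul, sub_smul, one_smul]
    have hflow : ((-(n * c)) • T) (b i) = (-(n * (c * μ i))) • b i := by
      rw [smul_apply, hTb i, smul_smul, neg_mul, mul_assoc]
    rw [ContinuousLinearMap.coe_coe, sub_apply,
      ContinuousLinearMap.pow_apply_of_apply_eq_smul heuler,
      ContinuousLinearMap.exp_apply_of_apply_eq_smul hflow, sub_smul]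
  · obtain ⟨hμ₀, hμlam⟩ := hμ i
    have hcμ : c * μ i ≤ c * lam := mul_le_mul_of_nonneg_left hμlam hc
    calc ‖(1 - c * μ i) ^ n - Real.exp (-(n * (c * μ i)))‖ ≤ n * (c * μ i) ^ 2 / 2 :=
          Real.abs_one_sub_pow_sub_exp_le (mul_nonneg hc hμ₀) (hcμ.trans hcfl) n
      _ ≤ n / 2 * (c * lam) ^ 2 := by
          rw [mul_div_right_comm]; gcongr

end IsSelfAdjoint

theorem euler_vs_heat_flow_error_general
    (N : ℕ)
    (L : Matrix (Fin N) (Fin N) ℝ) (hsymm : L.IsSymm)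
    (lammax α Δt : ℝ)
    (hspec : ∀ x : EuclideanSpace ℝ (Fin N),
      0 ≤ ⟪x, Matrix.toEuclideanCLM (𝕜 := ℝ) L x⟫ ∧
      ⟪x, Matrix.toEuclideanCLM (𝕜 := ℝ) L x⟫ ≤ lammax * ‖x‖ ^ 2)
    (hα : 0 < α) (hΔt : 0 < Δt) (hcfl : α * lammax * Δt ≤ 1) :
    ∀ (n : ℕ) (x : EuclideanSpace ℝ (Fin N)),
      ‖Matrix.toEuclideanCLM (𝕜 := ℝ) ((1 - (α * Δt) • L) ^ n) x -
          NormedSpace.exp (Matrix.toEuclideanCLM (𝕜 := ℝ) ((-(α * n * Δt)) • L)) x‖ ≤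
        (n : ℝ) / 2 * (α * Δt * lammax) ^ 2 * ‖x‖ := by
  intro n x
  have hT : IsSelfAdjoint (Matrix.toEuclideanCLM (𝕜 := ℝ) L) :=
    (Matrix.isHermitian_iff_isSelfAdjoint.mp (Matrix.isHermitian_iff_isSymm.mpr hsymm)).map _
  rw [map_pow, map_sub, map_one, map_smul, map_smul,
    show α * n * Δt = n * (α * Δt) by ring]
  exact hT.norm_one_sub_smul_pow_apply_sub_exp_apply_le hspec (by positivity)
    (by linarith [mul_right_comm α lammax Δt]) n x

/-- **Global discretization error of multi-layer explicit Euler diffusion.**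
If `L` is an `N×N` real symmetric positive-semidefinite matrix with
`⟨x, Lx⟩ ≤ λ_max ‖x‖²`, and `α, Δt > 0` satisfy `α λ_max Δt ≤ 1`, then for every `n`
the `n`-step explicit Euler scheme differs from the exact flow `exp(-α n Δt · L)` by at
most `(n/2)(α Δt λ_max)² ‖x‖`. -/
theorem euler_vs_heat_flow_error
    (N : ℕ) (hN : 1 ≤ N)
    (L : Matrix (Fin N) (Fin N) ℝ) (hsymm : L.IsSymm)
    (lammax α Δt : ℝ)
    (hspec : ∀ x : EuclideanSpace ℝ (Fin N),
      0 ≤ ⟪x, Matrix.toEuclideanCLM (𝕜 := ℝ) L x⟫ ∧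
      ⟪x, Matrix.toEuclideanCLM (𝕜 := ℝ) L x⟫ ≤ lammax * ‖x‖ ^ 2)
    (hα : 0 < α) (hΔt : 0 < Δt) (hcfl : α * lammax * Δt ≤ 1) :
    ∀ (n : ℕ) (x : EuclideanSpace ℝ (Fin N)),
      ‖Matrix.toEuclideanCLM (𝕜 := ℝ) ((1 - (α * Δt) • L) ^ n) x -
          NormedSpace.exp (Matrix.toEuclideanCLM (𝕜 := ℝ) ((-(α * n * Δt)) • L)) x‖ ≤
        (n : ℝ) / 2 * (α * Δt * lammax) ^ 2 * ‖x‖ :=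
  euler_vs_heat_flow_error_general N L hsymm lammax α Δt hspec hα hΔt hcfl
end
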